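/- arXiv:1805.09627 — 2 statements merged into one kernel-verified Lean document; each statement's English description precedes it below -/
import Mathlib

section
/- Differences of perfect matchings are killed by the symmetrized matrices: let E be a finite set, σ₀, σ₁ permutations of E, m a perfect matching, and ρ_{m,c} = (I − ς_{m,c})^{-1} for c = 0,1 the associated matrices. Then for any two perfect matchings m₃ and m₄, viewed as column vectors in ℤ^E, one has (ρ_{m,0} + ρ_{m,0}ᵀ − I)(m₃ − m₄) = 0 and (ρ_{m,1} + ρ_{m,1}ᵀ − I)(m₃ − m₄) = 0. -/
open Finset Matrix

variable {E : Type*}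

/-- A perfect matching of `(E, σ₀, σ₁)`: a `{0,1}`-valued function on `E` such that every
cycle (orbit) of `σ₀` and every cycle of `σ₁` contains exactly one element with value `1`. -/
def IsPerfectMatching (σ₀ σ₁ : Equiv.Perm E) (m : E → ℤ) : Prop :=
  (∀ e, m e = 0 ∨ m e = 1) ∧
  (∀ e, ∃! e', σ₀.SameCycle e e' ∧ m e' = 1) ∧
  (∀ e, ∃! e', σ₁.SameCycle e e' ∧ m e' = 1)

/-- The "broken" permutation matrix `ς_{m,σ}`: the matrix of the permutation `σ`
(with `(σ e, e)`-entry `1`) in which every column `e` with `m e = 1` is replaced by zero. -/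
def brokenPermMatrix [DecidableEq E] (σ : Equiv.Perm E) (m : E → ℤ) : Matrix E E ℤ :=
  Matrix.of fun e' e => if e' = σ e ∧ m e = 0 then 1 else 0

/-- The matrix `ρ_{m,σ} = (I - ς_{m,σ})⁻¹`. -/
noncomputable def rhoMatrix [Fintype E] [DecidableEq E] (σ : Equiv.Perm E) (m : E → ℤ) :
    Matrix E E ℤ :=
  (1 - brokenPermMatrix σ m)⁻¹

/-!
Write `ς` for the broken permutation matrix and `A = 1 - ς`. As `ς` is nilpotent, `A` is
invertible, and `ρ + ρᵀ - 1 = ρ (A + Aᵀ - A Aᵀ) ρᵀ = ρ (1 - ς ςᵀ) ρᵀ`. The matrix `1 - ς ςᵀ` is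
the diagonal projection onto the points `σ p` with `m p = 1`, where the paths into which
`ς` breaks the cycles of `σ` start. Since `A` sends the indicator of the cycle of `p` to the basis
vector at `σ p`, the entry of `ρᵀ v` at `σ p` is the sum of `v` over that cycle, which vanishes
for the difference of two perfect matchings.
-/

theorem Matrix.nonsing_inv_add_transpose_sub_one {n R : Type*} [Fintype n] [DecidableEq n]
    [CommRing R] (A : Matrix n n R) (hA : IsUnit A.det) :
    A⁻¹ + A⁻¹ᵀ - 1 = A⁻¹ * (A + Aᵀ - A * Aᵀ) * A⁻¹ᵀ := by
  have hAT : IsUnit Aᵀ.det := by rwa [det_transpose]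
  simp only [Matrix.mul_add, Matrix.mul_sub, Matrix.add_mul, Matrix.sub_mul, ← Matrix.mul_assoc,
    nonsing_inv_mul A hA, Matrix.one_mul, transpose_nonsing_inv,
    Matrix.mul_assoc _ Aᵀ, mul_nonsing_inv Aᵀ hAT, Matrix.mul_one]
  abel

def IsCycleTransversal (σ : Equiv.Perm E) (m : E → ℤ) : Prop :=
  (∀ e, m e = 0 ∨ m e = 1) ∧ ∀ e, ∃! e', σ.SameCycle e e' ∧ m e' = 1

theorem IsPerfectMatching.left {σ₀ σ₁ : Equiv.Perm E} {m : E → ℤ}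
    (h : IsPerfectMatching σ₀ σ₁ m) : IsCycleTransversal σ₀ m :=
  ⟨h.1, h.2.1⟩

theorem IsPerfectMatching.right {σ₀ σ₁ : Equiv.Perm E} {m : E → ℤ}
    (h : IsPerfectMatching σ₀ σ₁ m) : IsCycleTransversal σ₁ m :=
  ⟨h.1, h.2.2⟩

namespace IsCycleTransversal

variable {σ : Equiv.Perm E} {m : E → ℤ}

theorem eq_one_of_ne_zero (h : IsCycleTransversal σ m) {e : E} (he : m e ≠ 0) : m e = 1 :=
  (h.1 e).resolve_left he

theorem eq_of_sameCycle (h : IsCycleTransversal σ m) {x y : E} (hxy : σ.SameCycle x y)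
    (hx : m x = 1) (hy : m y = 1) : x = y :=
  (h.2 x).unique ⟨Equiv.Perm.SameCycle.refl σ x, hx⟩ ⟨hxy, hy⟩

theorem exists_pow_apply_ne_zero [Finite E] (h : IsCycleTransversal σ m) (e : E) :
    ∃ k : ℕ, m ((σ ^ k) e) ≠ 0 := by
  obtain ⟨e', ⟨he', hm⟩, -⟩ := h.2 e
  obtain ⟨k, rfl⟩ := he'.exists_nat_pow_eq
  exact ⟨k, by simp [hm]⟩

theorem sum_sameCycle_eq_one [Fintype E] [DecidableRel σ.SameCycle] (h : IsCycleTransversal σ m)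
    (e : E) : ∑ x ∈ univ.filter (σ.SameCycle e), m x = 1 := by
  obtain ⟨e', ⟨he', hm⟩, -⟩ := h.2 e
  rw [sum_eq_single_of_mem e' (by simpa using he')]
  · exact hm
  · intro x hx hxe'
    by_contra hx0
    exact hxe' (h.eq_of_sameCycle ((mem_filter.1 hx).2.symm.trans he')
      (h.eq_one_of_ne_zero hx0) hm)

theorem sum_sameCycle_sub_eq_zero [Fintype E] [DecidableRel σ.SameCycle] {m' : E → ℤ}
    (h : IsCycleTransversal σ m) (h' : IsCycleTransversal σ m') (e : E) :
    ∑ x ∈ univ.filter (σ.SameCycle e), (m - m') x = 0 := by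
  simp only [Pi.sub_apply, sum_sub_distrib, h.sum_sameCycle_eq_one, h'.sum_sameCycle_eq_one,
    sub_self]

end IsCycleTransversal

section brokenPermMatrix

theorem brokenPermMatrix_apply_apply_self [DecidableEq E] (σ : Equiv.Perm E) (m : E → ℤ)
    (e : E) :
    brokenPermMatrix σ m (σ e) e = if m e = 0 then 1 else 0 := by
  simp [brokenPermMatrix]

variable [Fintype E] [DecidableEq E] (σ : Equiv.Perm E) (m : E → ℤ)

theorem brokenPermMatrix_pow_apply (k : ℕ) (e' e : E) :
    (brokenPermMatrix σ m ^ k) e' e =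
      if e' = (σ ^ k) e ∧ ∀ j < k, m ((σ ^ j) e) = 0 then 1 else 0 := by
  induction k generalizing e with
  | zero => simp [one_apply]
  | succ k ih =>
    rw [pow_succ, mul_apply, sum_eq_single (σ e) (fun x _ hx => by simp [brokenPermMatrix, hx])
      (by simp), brokenPermMatrix_apply_apply_self, ih]
    simp only [Nat.forall_lt_succ_left, pow_succ, Equiv.Perm.mul_apply, pow_zero,
      Equiv.Perm.one_apply]
    by_cases he : m e = 0 <;> simp [he]

theorem isNilpotent_brokenPermMatrix (h : ∀ e, ∃ k : ℕ, m ((σ ^ k) e) ≠ 0) :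
    IsNilpotent (brokenPermMatrix σ m) := by
  choose k hk using h
  obtain ⟨N, hN⟩ := Finite.exists_le k
  refine ⟨N + 1, ?_⟩
  ext e' e
  rw [brokenPermMatrix_pow_apply, Matrix.zero_apply, if_neg]
  exact fun ⟨_, hzero⟩ => hk e (hzero _ (Nat.lt_succ_of_le (hN e)))

theorem brokenPermMatrix_mulVec_apply (u : E → ℤ) (e : E) :
    (brokenPermMatrix σ m *ᵥ u) e = if m (σ.symm e) = 0 then u (σ.symm e) else 0 := by
  rw [mulVec, dotProduct, sum_eq_single (σ.symm e)]
  · by_cases he : m (σ.symm e) = 0 <;> simp [brokenPermMatrix, he]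
  · intro x _ hx
    have : e ≠ σ x := fun h => hx (by simp [h])
    simp [brokenPermMatrix, this]
  · simp

theorem brokenPermMatrix_transpose_mulVec_apply (w : E → ℤ) (e : E) :
    ((brokenPermMatrix σ m)ᵀ *ᵥ w) e = if m e = 0 then w (σ e) else 0 := by
  rw [mulVec, dotProduct, sum_eq_single (σ e)]
  · by_cases he : m e = 0 <;> simp [brokenPermMatrix, he]
  · intro x _ hx
    simp [brokenPermMatrix, hx]
  · simp

end brokenPermMatrix

section rhoMatrix

variable [Fintype E] [DecidableEq E] {σ : Equiv.Perm E} {m : E → ℤ}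

theorem IsCycleTransversal.isUnit_det_one_sub_brokenPermMatrix (h : IsCycleTransversal σ m) :
    IsUnit (1 - brokenPermMatrix σ m).det :=
  (isUnit_iff_isUnit_det _).1
    (isNilpotent_brokenPermMatrix σ m h.exists_pow_apply_ne_zero).isUnit_one_sub

theorem IsCycleTransversal.rhoMatrix_add_transpose_sub_one (h : IsCycleTransversal σ m) :
    rhoMatrix σ m + (rhoMatrix σ m)ᵀ - 1 =
      rhoMatrix σ m * (1 - brokenPermMatrix σ m * (brokenPermMatrix σ m)ᵀ) *
        (rhoMatrix σ m)ᵀ := by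
  rw [rhoMatrix, nonsing_inv_add_transpose_sub_one _ h.isUnit_det_one_sub_brokenPermMatrix]
  congr 2
  simp only [transpose_sub, transpose_one]
  noncomm_ring

theorem one_sub_brokenPermMatrix_mul_transpose_mulVec_apply (w : E → ℤ) (e : E) :
    ((1 - brokenPermMatrix σ m * (brokenPermMatrix σ m)ᵀ) *ᵥ w) e =
      if m (σ.symm e) = 0 then 0 else w e := by
  rw [sub_mulVec, one_mulVec, ← mulVec_mulVec, Pi.sub_apply, brokenPermMatrix_mulVec_apply,
    brokenPermMatrix_transpose_mulVec_apply]
  split_ifs <;> simp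

theorem IsCycleTransversal.one_sub_brokenPermMatrix_mulVec_sameCycle
    (h : IsCycleTransversal σ m) {p : E} (hp : m p = 1) :
    (1 - brokenPermMatrix σ m) *ᵥ (fun x => if σ.SameCycle p x then 1 else 0) =
      Pi.single (σ p) 1 := by
  ext x
  rw [sub_mulVec, one_mulVec, Pi.sub_apply, brokenPermMatrix_mulVec_apply]
  by_cases hx : x = σ p
  · simp [hx, hp, Equiv.Perm.SameCycle.refl]
  simp only [Pi.single_eq_of_ne hx, Equiv.Perm.sameCycle_symm_apply_right]
  by_cases hpx : σ.SameCycle p x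
  · have hx0 : m (σ.symm x) = 0 := by
      by_contra hx0
      have hp_eq := h.eq_of_sameCycle (Equiv.Perm.sameCycle_symm_apply_right.2 hpx) hp
        (h.eq_one_of_ne_zero hx0)
      exact hx (by simp [hp_eq])
    simp [hpx, hx0]
  · simp [hpx]

theorem IsCycleTransversal.rhoMatrix_transpose_mulVec_apply (h : IsCycleTransversal σ m)
    {p : E} (hp : m p = 1) (v : E → ℤ) :
    ((rhoMatrix σ m)ᵀ *ᵥ v) (σ p) = ∑ x ∈ univ.filter (σ.SameCycle p), v x := by
  have hcol :
      rhoMatrix σ m *ᵥ Pi.single (σ p) 1 = fun x => if σ.SameCycle p x then 1 else 0 := by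
    rw [← h.one_sub_brokenPermMatrix_mulVec_sameCycle hp, rhoMatrix, mulVec_mulVec,
      nonsing_inv_mul _ h.isUnit_det_one_sub_brokenPermMatrix, one_mulVec]
  rw [mulVec_transpose, ← dotProduct_single_one (v ᵥ* _), ← dotProduct_mulVec, hcol,
    sum_filter]
  simp [dotProduct]

theorem IsCycleTransversal.rhoMatrix_add_transpose_sub_one_mulVec_eq_zero
    (h : IsCycleTransversal σ m) {v : E → ℤ}
    (hv : ∀ p, ∑ x ∈ univ.filter (σ.SameCycle p), v x = 0) :
    (rhoMatrix σ m + (rhoMatrix σ m)ᵀ - 1) *ᵥ v = 0 := by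
  have hstarts :
      (1 - brokenPermMatrix σ m * (brokenPermMatrix σ m)ᵀ) *ᵥ ((rhoMatrix σ m)ᵀ *ᵥ v) = 0 := by
    ext e
    rw [one_sub_brokenPermMatrix_mul_transpose_mulVec_apply]
    split_ifs with he
    · rfl
    · simpa [hv] using h.rhoMatrix_transpose_mulVec_apply (h.eq_one_of_ne_zero he) v
  rw [h.rhoMatrix_add_transpose_sub_one, ← mulVec_mulVec, ← mulVec_mulVec, hstarts, mulVec_zero]

end rhoMatrix

/-- The differences of perfect matchings, viewed as column vectors, are killed by the
symmetrized matrices `ρ_{m,c} + ρ_{m,c}ᵀ - I` for `c = 0, 1`. -/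
theorem symmetrized_rho_mulVec_matching_difference [Fintype E] [DecidableEq E]
    (σ₀ σ₁ : Equiv.Perm E) (m m₃ m₄ : E → ℤ)
    (hm : IsPerfectMatching σ₀ σ₁ m)
    (hm₃ : IsPerfectMatching σ₀ σ₁ m₃)
    (hm₄ : IsPerfectMatching σ₀ σ₁ m₄) :
    (rhoMatrix σ₀ m + (rhoMatrix σ₀ m)ᵀ - 1).mulVec (m₃ - m₄) = 0 ∧
    (rhoMatrix σ₁ m + (rhoMatrix σ₁ m)ᵀ - 1).mulVec (m₃ - m₄) = 0 :=
  ⟨hm.left.rhoMatrix_add_transpose_sub_one_mulVec_eq_zero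
      (hm₃.left.sum_sameCycle_sub_eq_zero hm₄.left),
    hm.right.rhoMatrix_add_transpose_sub_one_mulVec_eq_zero
      (hm₃.right.sum_sameCycle_sub_eq_zero hm₄.right)⟩
end

section
/- Independence of ε₊ of the chosen perfect matching: let E be a finite set, σ₀, σ₁ permutations of E, and for a perfect matching m set ρ_{m,c} = (I − ς_{m,c})^{-1} (c = 0,1). Then for any two perfect matchings m and m̂, and for all h₁, h₂ in the subgroup H₁ ⊆ ℤ^E generated by differences of perfect matchings, one has h₁ᵀ (ρ_{m,0} + ρ_{m,1} − I) h₂ = h₁ᵀ (ρ_{m̂,0} + ρ_{m̂,1} − I) h₂. -/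
open Finset Matrix

variable {E : Type*}

/-- The subgroup `H₁ ⊆ ℤ^E` generated by all differences of perfect matchings. -/
def matchingHomology (σ₀ σ₁ : Equiv.Perm E) : AddSubgroup (E → ℤ) :=
  AddSubgroup.closure
    {x | ∃ m' m'', IsPerfectMatching σ₀ σ₁ m' ∧ IsPerfectMatching σ₀ σ₁ m'' ∧ x = m' - m''}

section Aux
variable [Fintype E] [DecidableEq E] {σ : Equiv.Perm E} {m : E → ℤ}

/-- One-sided matching condition (w.r.t. a single permutation). -/
def IsPM1 (σ : Equiv.Perm E) (m : E → ℤ) : Prop :=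
  (∀ e, m e = 0 ∨ m e = 1) ∧ (∀ e, ∃! e', σ.SameCycle e e' ∧ m e' = 1)

/-- Zero cycle-sums condition. -/
def ZeroCyc (σ : Equiv.Perm E) (h : E → ℤ) : Prop :=
  ∀ e, ∑ e' ∈ Finset.univ.filter (σ.SameCycle e ·), h e' = 0

lemma broken_pow_ne_zero (n : ℕ) (e' e : E) (h : (brokenPermMatrix σ m ^ n) e' e ≠ 0) :
    ∀ i < n, m ((σ ^ i) e) = 0 := by
  induction n generalizing e' e with
  | zero => omega
  | succ n ih =>
    rw [pow_succ, Matrix.mul_apply] at h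
    obtain ⟨x, -, hx⟩ := Finset.exists_ne_zero_of_sum_ne_zero h
    have h1 : brokenPermMatrix σ m x e ≠ 0 := by
      intro h0; rw [h0, mul_zero] at hx; exact hx rfl
    have h2 : x = σ e ∧ m e = 0 := by
      by_contra hc; exact h1 (by simp [brokenPermMatrix, hc])
    have h3 : (brokenPermMatrix σ m ^ n) e' x ≠ 0 := by
      intro h0; rw [h0, zero_mul] at hx; exact hx rfl
    intro i hi
    rcases Nat.eq_zero_or_pos i with rfl | hpos
    · simpa using h2.2
    · obtain ⟨j, rfl⟩ := Nat.exists_eq_add_of_lt hpos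
      simp only [zero_add]
      have := ih e' x h3 j (by omega)
      rw [h2.1] at this
      simpa [pow_succ, Equiv.Perm.mul_apply] using this

lemma broken_nilpotent (hm : IsPM1 σ m) : IsNilpotent (brokenPermMatrix σ m) := by
  refine ⟨orderOf σ, ?_⟩
  ext e' e
  rw [Matrix.zero_apply]
  by_contra h
  obtain ⟨x, ⟨hxc, hx1⟩, -⟩ := hm.2 e
  obtain ⟨i, hi, hix⟩ := hxc.exists_pow_eq'
  have := broken_pow_ne_zero (orderOf σ) e' e h i hi
  rw [hix, hx1] at this
  exact one_ne_zero this

lemma isUnit_det_one_sub (hm : IsPM1 σ m) : IsUnit (1 - brokenPermMatrix σ m).det :=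
  (Matrix.isUnit_iff_isUnit_det _).mp (broken_nilpotent hm).isUnit_one_sub

lemma one_sub_mul_rho (hm : IsPM1 σ m) :
    (1 - brokenPermMatrix σ m) * rhoMatrix σ m = 1 :=
  Matrix.mul_nonsing_inv _ (isUnit_det_one_sub hm)

/-- The row of `rhoMatrix` at a marked element is the indicator of its cycle. -/
lemma rho_row_marked (hm : IsPM1 σ m) {x : E} (hx : m x = 1) (e : E) :
    rhoMatrix σ m x e = if σ.SameCycle x e then 1 else 0 := by
  set w : E → ℤ := fun e => if σ.SameCycle x e then 1 else 0 with hw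
  have huniq : ∀ y, σ.SameCycle x y ∧ m y = 1 → y = x := by
    intro y hy
    obtain ⟨z, hz, hu⟩ := hm.2 x
    rw [hu y hy, hu x ⟨Equiv.Perm.SameCycle.refl σ x, hx⟩]
  have hclaim : w ᵥ* (1 - brokenPermMatrix σ m) = Pi.single x 1 := by
    funext e
    have hsc : σ.SameCycle x (σ e) ↔ σ.SameCycle x e := Equiv.Perm.sameCycle_apply_right
    have hws : w (σ e) = w e := by simp only [hw, hsc]
    have hsum : (w ᵥ* (1 - brokenPermMatrix σ m)) e
        = w e - (if m e = 0 then w (σ e) else 0) := by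
      simp only [Matrix.vecMul, dotProduct, Matrix.sub_apply, Matrix.one_apply,
        brokenPermMatrix, Matrix.of_apply, mul_sub, mul_ite, mul_one, mul_zero]
      rw [Finset.sum_sub_distrib]
      congr 1
      · rw [Finset.sum_congr rfl (fun e' _ => by
          rw [show (if e' = e then w e' else 0) = (if e' = e then w e else 0) by
            split <;> simp_all])]
        simp
      · by_cases hme : m e = 0
        · simp only [hme, and_true, if_true]
          rw [Finset.sum_congr rfl (fun e' _ => by
            rw [show (if e' = σ e then w e' else 0) = (if e' = σ e then w (σ e) else 0) by
              split <;> simp_all])]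
          simp
        · simp [hme]
    rw [hsum]
    by_cases hme : m e = 0
    · have hex : e ≠ x := fun hc => by rw [hc, hx] at hme; exact one_ne_zero hme
      rw [if_pos hme, hws, sub_self, Pi.single_apply, if_neg hex]
    · have hme1 : m e = 1 := (hm.1 e).resolve_left hme
      rw [if_neg hme, sub_zero, Pi.single_apply, hw]
      show (if σ.SameCycle x e then (1:ℤ) else 0) = if e = x then 1 else 0
      by_cases hc : σ.SameCycle x e
      · rw [if_pos hc, if_pos (huniq e ⟨hc, hme1⟩)]
      · rw [if_neg hc, if_neg (fun he => hc (by rw [he]))]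
  have h2 : Pi.single x 1 ᵥ* rhoMatrix σ m = w := by
    calc Pi.single x 1 ᵥ* rhoMatrix σ m
        = (w ᵥ* (1 - brokenPermMatrix σ m)) ᵥ* rhoMatrix σ m := by rw [hclaim]
      _ = w ᵥ* ((1 - brokenPermMatrix σ m) * rhoMatrix σ m) := by rw [Matrix.vecMul_vecMul]
      _ = w := by rw [one_sub_mul_rho hm, Matrix.vecMul_one]
  have h3 : (Pi.single x 1 ᵥ* rhoMatrix σ m) e = rhoMatrix σ m x e := by
    simp only [Matrix.vecMul, dotProduct, Pi.single_apply]
    rw [Finset.sum_congr rfl (fun e' _ => by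
      rw [show (if e' = x then (1:ℤ) else 0) * rhoMatrix σ m e' e
          = (if e' = x then rhoMatrix σ m x e else 0) by split <;> simp_all])]
    simp
  rw [← h3, h2]

/-- If `h` has zero cycle sums, then `ρ h` vanishes at marked elements. -/
lemma rho_mulVec_marked (hm : IsPM1 σ m) {h : E → ℤ} (hZ : ZeroCyc σ h)
    {x : E} (hx : m x = 1) : (rhoMatrix σ m).mulVec h x = 0 := by
  have : (rhoMatrix σ m).mulVec h x
      = ∑ e' ∈ Finset.univ.filter (σ.SameCycle x ·), h e' := by
    simp only [Matrix.mulVec, dotProduct]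
    rw [Finset.sum_filter]
    refine Finset.sum_congr rfl fun e _ => ?_
    rw [rho_row_marked hm hx e]
    split <;> simp
  rw [this, hZ x]

/-- The key recurrence: `(ρ h)(σ e) = h(σ e) + (ρ h)(e)`, independent of `m`. -/
lemma rho_mulVec_recurrence (hm : IsPM1 σ m) {h : E → ℤ} (hZ : ZeroCyc σ h) (e : E) :
    (rhoMatrix σ m).mulVec h (σ e) = h (σ e) + (rhoMatrix σ m).mulVec h e := by
  set u := (rhoMatrix σ m).mulVec h with hu
  have heq : (1 - brokenPermMatrix σ m).mulVec u = h := by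
    rw [hu, Matrix.mulVec_mulVec, one_sub_mul_rho hm, Matrix.one_mulVec]
  have heval : u (σ e) - (if m e = 0 then u e else 0) = h (σ e) := by
    have := congrFun heq (σ e)
    rw [Matrix.sub_mulVec, Matrix.one_mulVec, Pi.sub_apply] at this
    rw [← this]
    congr 1
    simp only [Matrix.mulVec, dotProduct, brokenPermMatrix, Matrix.of_apply]
    rw [Finset.sum_congr rfl (fun e' _ => by
      rw [show (if σ e = σ e' ∧ m e' = 0 then (1:ℤ) else 0) * u e'
          = (if e' = e then (if m e = 0 then u e else 0) else 0) by
        by_cases h1 : e' = e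
        · subst h1; by_cases h2 : m e' = 0 <;> simp [h2]
        · have : ¬(σ e = σ e') := fun hc => h1 (σ.injective hc.symm)
          simp [h1, this]])]
    simp
  by_cases hme : m e = 0
  · rw [if_pos hme] at heval; linarith
  · have hme1 : m e = 1 := (hm.1 e).resolve_left hme
    have h0 : u e = 0 := rho_mulVec_marked hm hZ hme1
    rw [if_neg hme, sub_zero] at heval
    rw [heval, h0, add_zero]

/-- Difference of the two rho-images is constant on cycles. -/
lemma rho_diff_const {mh : E → ℤ} (hm : IsPM1 σ m) (hmh : IsPM1 σ mh)
    {h : E → ℤ} (hZ : ZeroCyc σ h) {e e' : E} (hc : σ.SameCycle e e') :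
    ((rhoMatrix σ m).mulVec h - (rhoMatrix σ mh).mulVec h) e'
      = ((rhoMatrix σ m).mulVec h - (rhoMatrix σ mh).mulVec h) e := by
  set v := (rhoMatrix σ m).mulVec h - (rhoMatrix σ mh).mulVec h with hv
  have hstep : ∀ y, v (σ y) = v y := by
    intro y
    simp only [hv, Pi.sub_apply, rho_mulVec_recurrence hm hZ y,
      rho_mulVec_recurrence hmh hZ y]
    ring
  obtain ⟨i, -, hi⟩ := hc.exists_pow_eq'
  have key : ∀ i : ℕ, v ((σ ^ i) e) = v e := by
    intro i
    induction i with
    | zero => simp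
    | succ k ih =>
      have hps : (σ ^ (k + 1)) e = σ ((σ ^ k) e) := by
        rw [pow_succ', Equiv.Perm.mul_apply]
      rw [hps, hstep, ih]
  rw [← hi, key]

/-- Pairing a zero-cycle-sum vector with a cycle-constant vector gives zero. -/
lemma pairing_zero {h v : E → ℤ} (hZ : ZeroCyc σ h)
    (hv : ∀ e e', σ.SameCycle e e' → v e' = v e) : h ⬝ᵥ v = 0 := by
  suffices H : ∀ s : Finset E, (∀ e ∈ s, ∀ e', σ.SameCycle e e' → e' ∈ s) →
      ∑ e ∈ s, h e * v e = 0 by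
    simpa [dotProduct] using H Finset.univ (by simp)
  intro s
  induction s using Finset.strongInduction with
  | _ s ih =>
    intro hs
    rcases s.eq_empty_or_nonempty with rfl | ⟨x, hxs⟩
    · simp
    · set C := Finset.univ.filter (σ.SameCycle x ·) with hC
      have hCs : C ⊆ s := by
        intro e he
        rw [hC, Finset.mem_filter] at he
        exact hs x hxs e he.2
      have hxC : x ∈ C := by
        rw [hC, Finset.mem_filter]
        exact ⟨Finset.mem_univ x, Equiv.Perm.SameCycle.refl σ x⟩
      have hsplit : ∑ e ∈ s \ C, h e * v e + ∑ e ∈ C, h e * v e = ∑ e ∈ s, h e * v e :=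
        Finset.sum_sdiff hCs
      have hCsum : ∑ e ∈ C, h e * v e = 0 := by
        have : ∀ e ∈ C, h e * v e = h e * v x := by
          intro e he
          rw [hC, Finset.mem_filter] at he
          rw [hv x e he.2]
        rw [Finset.sum_congr rfl this, ← Finset.sum_mul, hZ x, zero_mul]
      have hrest : ∑ e ∈ s \ C, h e * v e = 0 := by
        refine ih (s \ C) (Finset.sdiff_ssubset hCs ⟨x, hxC⟩) ?_
        intro e he e' hee'
        rw [Finset.mem_sdiff] at he ⊢
        refine ⟨hs e he.1 e' hee', fun he'C => he.2 ?_⟩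
        rw [hC, Finset.mem_filter] at he'C ⊢
        exact ⟨Finset.mem_univ e, he'C.2.trans hee'.symm⟩
      rw [← hsplit, hCsum, hrest, add_zero]

/-- A one-sided perfect matching sums to `1` on each cycle. -/
lemma pm_cycle_sum (hm : IsPM1 σ m) (e : E) :
    ∑ e' ∈ Finset.univ.filter (σ.SameCycle e ·), m e' = 1 := by
  obtain ⟨x, ⟨hxc, hx1⟩, hu⟩ := hm.2 e
  have hcong : ∀ e' ∈ Finset.univ.filter (σ.SameCycle e ·), m e' = if e' = x then 1 else 0 := by
    intro e' he'
    rw [Finset.mem_filter] at he'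
    by_cases h1 : e' = x
    · rw [if_pos h1, h1, hx1]
    · rw [if_neg h1]
      rcases hm.1 e' with h0 | h0
      · exact h0
      · exact absurd (hu e' ⟨he'.2, h0⟩) h1
  rw [Finset.sum_congr rfl hcong, Finset.sum_ite_eq' _ x (fun _ => (1 : ℤ)), if_pos]
  rw [Finset.mem_filter]
  exact ⟨Finset.mem_univ x, hxc⟩

/-- The zero-cycle-sums vectors form a subgroup. -/
def zeroCycSubgroup (σ : Equiv.Perm E) : AddSubgroup (E → ℤ) where
  carrier := {h | ZeroCyc σ h}
  add_mem' := by
    intro a b ha hb e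
    simp only [Pi.add_apply, Finset.sum_add_distrib, ha e, hb e, add_zero]
  zero_mem' := by intro e; simp
  neg_mem' := by
    intro a ha e
    simp only [Pi.neg_apply, Finset.sum_neg_distrib, ha e, neg_zero]

lemma mem_zeroCyc {σ₀ σ₁ : Equiv.Perm E} {h : E → ℤ}
    (hh : h ∈ matchingHomology σ₀ σ₁) : ZeroCyc σ₀ h ∧ ZeroCyc σ₁ h := by
  have h0 : matchingHomology σ₀ σ₁ ≤ zeroCycSubgroup σ₀ ⊓ zeroCycSubgroup σ₁ := by
    rw [matchingHomology, AddSubgroup.closure_le]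
    rintro x ⟨m', m'', hm', hm'', rfl⟩
    constructor
    · intro e
      simp only [Pi.sub_apply, Finset.sum_sub_distrib,
        pm_cycle_sum ⟨hm'.1, hm'.2.1⟩ e, pm_cycle_sum ⟨hm''.1, hm''.2.1⟩ e, sub_self]
    · intro e
      simp only [Pi.sub_apply, Finset.sum_sub_distrib,
        pm_cycle_sum ⟨hm'.1, hm'.2.2⟩ e, pm_cycle_sum ⟨hm''.1, hm''.2.2⟩ e, sub_self]
  exact h0 hh

lemma rho_pairing_eq {mh : E → ℤ} (hm : IsPM1 σ m) (hmh : IsPM1 σ mh) {h₁ h₂ : E → ℤ}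
    (hZ1 : ZeroCyc σ h₁) (hZ2 : ZeroCyc σ h₂) :
    h₁ ⬝ᵥ (rhoMatrix σ m).mulVec h₂ = h₁ ⬝ᵥ (rhoMatrix σ mh).mulVec h₂ := by
  have h0 : h₁ ⬝ᵥ ((rhoMatrix σ m).mulVec h₂ - (rhoMatrix σ mh).mulVec h₂) = 0 :=
    pairing_zero hZ1 (fun e e' hc => rho_diff_const hm hmh hZ2 hc)
  rw [dotProduct_sub] at h0
  linarith

end Aux

/-- The form `ε₊` given by `ρ_{m,0} + ρ_{m,1} - I` on the subgroup `H₁` generated by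
differences of perfect matchings does not depend on the chosen perfect matching `m`. -/
theorem epsPlus_independent_of_matching [Fintype E] [DecidableEq E]
    (σ₀ σ₁ : Equiv.Perm E) (m mh : E → ℤ)
    (hm : IsPerfectMatching σ₀ σ₁ m) (hmh : IsPerfectMatching σ₀ σ₁ mh)
    (h₁ h₂ : E → ℤ)
    (hh₁ : h₁ ∈ matchingHomology σ₀ σ₁) (hh₂ : h₂ ∈ matchingHomology σ₀ σ₁) :
    h₁ ⬝ᵥ (rhoMatrix σ₀ m + rhoMatrix σ₁ m - 1).mulVec h₂ =
      h₁ ⬝ᵥ (rhoMatrix σ₀ mh + rhoMatrix σ₁ mh - 1).mulVec h₂ := by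
  obtain ⟨hZ10, hZ11⟩ := mem_zeroCyc hh₁
  obtain ⟨hZ20, hZ21⟩ := mem_zeroCyc hh₂
  have e0 := rho_pairing_eq ⟨hm.1, hm.2.1⟩ ⟨hmh.1, hmh.2.1⟩ hZ10 hZ20
  have e1 := rho_pairing_eq ⟨hm.1, hm.2.2⟩ ⟨hmh.1, hmh.2.2⟩ hZ11 hZ21
  simp only [Matrix.sub_mulVec, Matrix.add_mulVec, Matrix.one_mulVec,
    dotProduct_sub, dotProduct_add]
  rw [e0, e1]
end
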